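/- arXiv:1201.0311 — 4 statements merged into one kernel-verified Lean document; each statement's English description precedes it below -/
import Mathlib

section
/- For every σ > 0, the quarter-circle distribution q_σ has negative free kurtosis: writing m₁ = ∫ x dq_σ(x) for its mean, the central moments satisfy ∫ (x − m₁)⁴ dq_σ(x) < 2·(∫ (x − m₁)² dq_σ(x))². -/
open MeasureTheory Real

/-!
The substitution `x = 2σ sin θ` turns the moments `∫ xᵏ dq_σ` into the Wallis integrals
`∫₀^{π/2} sinᵏ θ dθ`, which gives the raw moments `1, 8σ/(3π), σ², 64σ³/(15π), 2σ⁴`.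
Expanding the central moments binomially,
`2 m̃₂² − m̃₄ = 1152 σ⁴/(45 π⁴) · (800/81 − π²)`, which is positive because `π < 3.1416`.
-/

/-- The quarter-circle distribution with parameter `σ`: the measure on `ℝ` with density
`(1/(π σ²)) √(4σ² − x²)` on `[0, 2σ]` and `0` otherwise, w.r.t. Lebesgue measure. -/
noncomputable def quarterCircle (σ : ℝ) : Measure ℝ :=
  volume.withDensity (fun x =>
    ENNReal.ofReal (if x ∈ Set.Icc 0 (2 * σ) then (1 / (π * σ ^ 2)) * Real.sqrt (4 * σ ^ 2 - x ^ 2) else 0))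

open Finset in
theorem integral_sub_pow_eq_sum {μ : Measure ℝ} (m : ℝ) (n : ℕ)
    (hint : ∀ k ≤ n, Integrable (fun x => x ^ k) μ) :
    ∫ x, (x - m) ^ n ∂μ = ∑ k ∈ range (n + 1), (-m) ^ (n - k) * n.choose k * ∫ x, x ^ k ∂μ := by
  simp_rw [sub_eq_add_neg _ m, add_pow]
  rw [integral_finsetSum _ fun k hk =>
    ((hint k (Nat.lt_succ_iff.mp (mem_range.mp hk))).mul_const _).mul_const _]
  refine sum_congr rfl fun k _ => ?_
  rw [integral_mul_const, integral_mul_const]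
  ring

theorem integral_sin_pow_add_two_zero_pi_div_two (n : ℕ) :
    ∫ θ in (0)..(π / 2), sin θ ^ (n + 2) = (n + 1) / (n + 2) * ∫ θ in (0)..(π / 2), sin θ ^ n := by
  rw [integral_sin_pow]
  simp

theorem integral_sin_pow_zero_pi_div_two : ∫ θ in (0)..(π / 2), sin θ ^ 0 = π / 2 := by simp

theorem integral_sin_pow_one_pi_div_two : ∫ θ in (0)..(π / 2), sin θ ^ 1 = 1 := by
  simp [integral_sin]

theorem integral_sin_pow_two_pi_div_two : ∫ θ in (0)..(π / 2), sin θ ^ 2 = π / 4 := by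
  rw [integral_sin_pow_add_two_zero_pi_div_two, integral_sin_pow_zero_pi_div_two]
  ring

theorem integral_sin_pow_three_pi_div_two : ∫ θ in (0)..(π / 2), sin θ ^ 3 = 2 / 3 := by
  rw [integral_sin_pow_add_two_zero_pi_div_two, integral_sin_pow_one_pi_div_two]
  norm_num

theorem integral_sin_pow_four_pi_div_two : ∫ θ in (0)..(π / 2), sin θ ^ 4 = 3 * π / 16 := by
  rw [integral_sin_pow_add_two_zero_pi_div_two, integral_sin_pow_two_pi_div_two]
  ring

theorem integral_sqrt_sq_sub_sq_mul_pow {r : ℝ} (hr : 0 ≤ r) (k : ℕ) :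
    ∫ x in (0)..r, √(r ^ 2 - x ^ 2) * x ^ k
      = r ^ (k + 2) / (k + 2) * ∫ θ in (0)..(π / 2), sin θ ^ k := by
  have hsubst := intervalIntegral.integral_comp_mul_deriv (a := 0) (b := π / 2)
    (f := fun θ => r * sin θ) (f' := fun θ => r * cos θ)
    (g := fun x => √(r ^ 2 - x ^ 2) * x ^ k)
    (fun θ _ => (hasDerivAt_sin θ).const_mul r) (by fun_prop) (by fun_prop)
  simp only [Function.comp_apply, sin_pi_div_two, sin_zero, mul_one, mul_zero] at hsubst
  -- on `[0, π/2]` the substitution `x = r sin θ` turns `√(r² - x²)` into `r cos θ`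
  have hcos : ∀ θ ∈ Set.uIcc 0 (π / 2), √(r ^ 2 - (r * sin θ) ^ 2) * (r * sin θ) ^ k * (r * cos θ)
      = r ^ (k + 2) * (sin θ ^ k - sin θ ^ (k + 2)) := by
    intro θ hθ
    rw [Set.uIcc_of_le (by positivity)] at hθ
    have hc : 0 ≤ cos θ := cos_nonneg_of_mem_Icc ⟨by linarith [hθ.1, pi_pos], hθ.2⟩
    rw [show r ^ 2 - (r * sin θ) ^ 2 = (r * cos θ) ^ 2 by
        linear_combination (-r ^ 2) * sin_sq_add_cos_sq θ,
      sqrt_sq (mul_nonneg hr hc)]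
    linear_combination r ^ (k + 2) * sin θ ^ k * sin_sq_add_cos_sq θ
  rw [← hsubst, intervalIntegral.integral_congr hcos, intervalIntegral.integral_const_mul,
    intervalIntegral.integral_sub (by apply Continuous.intervalIntegrable; fun_prop)
      (by apply Continuous.intervalIntegrable; fun_prop),
    integral_sin_pow_add_two_zero_pi_div_two]
  field_simp
  ring

theorem quarterCircle_eq_withDensity_restrict (σ : ℝ) :
    quarterCircle σ = (volume.restrict (Set.Icc 0 (2 * σ))).withDensity
      (fun x => ENNReal.ofReal ((1 / (π * σ ^ 2)) * √(4 * σ ^ 2 - x ^ 2))) := by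
  rw [quarterCircle, ← withDensity_indicator measurableSet_Icc]
  congr 1
  ext x
  by_cases hx : x ∈ Set.Icc 0 (2 * σ) <;> simp [hx]

theorem integrable_quarterCircle {g : ℝ → ℝ} (hg : Continuous g) (σ : ℝ) :
    Integrable g (quarterCircle σ) := by
  rw [quarterCircle_eq_withDensity_restrict, integrable_withDensity_iff_integrable_smul'
    (by fun_prop) (ae_of_all _ fun _ => ENNReal.ofReal_lt_top)]
  simp only [ENNReal.toReal_ofReal']
  exact Continuous.integrableOn_Icc (by fun_prop)

theorem integral_quarterCircle {σ : ℝ} (hσ : 0 ≤ σ) (g : ℝ → ℝ) :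
    ∫ x, g x ∂(quarterCircle σ)
      = 1 / (π * σ ^ 2) * ∫ x in (0)..(2 * σ), √((2 * σ) ^ 2 - x ^ 2) * g x := by
  rw [quarterCircle_eq_withDensity_restrict, integral_withDensity_eq_integral_toReal_smul
    (by fun_prop) (ae_of_all _ fun _ => ENNReal.ofReal_lt_top), integral_Icc_eq_integral_Ioc,
    ← intervalIntegral.integral_of_le (by positivity), ← intervalIntegral.integral_const_mul]
  refine intervalIntegral.integral_congr fun x _ => ?_
  rw [ENNReal.toReal_ofReal (by positivity), smul_eq_mul, mul_pow]
  norm_num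
  ring

theorem integral_pow_quarterCircle {σ : ℝ} (hσ : 0 < σ) (k : ℕ) :
    ∫ x, x ^ k ∂(quarterCircle σ)
      = 4 * (2 * σ) ^ k / (π * (k + 2)) * ∫ θ in (0)..(π / 2), sin θ ^ k := by
  rw [integral_quarterCircle hσ.le, integral_sqrt_sq_sub_sq_mul_pow (by positivity)]
  field_simp
  ring

theorem integral_id_quarterCircle {σ : ℝ} (hσ : 0 < σ) :
    ∫ x, x ∂(quarterCircle σ) = 8 * σ / (3 * π) := by
  have h := integral_pow_quarterCircle hσ 1
  rw [integral_sin_pow_one_pi_div_two] at h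
  simp only [pow_one] at h
  rw [h]
  field_simp
  ring

theorem integral_sub_pow_quarterCircle {σ : ℝ} (hσ : 0 < σ) (m : ℝ) (n : ℕ) :
    ∫ x, (x - m) ^ n ∂(quarterCircle σ) = ∑ k ∈ Finset.range (n + 1),
      (-m) ^ (n - k) * n.choose k * (4 * (2 * σ) ^ k / (π * (k + 2)) *
        ∫ θ in (0)..(π / 2), sin θ ^ k) := by
  simp only [integral_sub_pow_eq_sum m n fun k _ => integrable_quarterCircle (continuous_pow k) σ,
    integral_pow_quarterCircle hσ]

theorem integral_sub_mean_sq_quarterCircle {σ : ℝ} (hσ : 0 < σ) :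
    ∫ x, (x - 8 * σ / (3 * π)) ^ 2 ∂(quarterCircle σ) = σ ^ 2 - 64 * σ ^ 2 / (9 * π ^ 2) := by
  simp only [integral_sub_pow_quarterCircle hσ, Finset.sum_range_succ, Finset.sum_range_zero,
    integral_sin_pow_zero_pi_div_two, integral_sin_pow_one_pi_div_two,
    integral_sin_pow_two_pi_div_two]
  norm_num [Nat.choose]
  field_simp
  ring

theorem integral_sub_mean_pow_four_quarterCircle {σ : ℝ} (hσ : 0 < σ) :
    ∫ x, (x - 8 * σ / (3 * π)) ^ 4 ∂(quarterCircle σ)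
      = 2 * σ ^ 4 - 128 * σ ^ 4 / (45 * π ^ 2) - 4096 * σ ^ 4 / (27 * π ^ 4) := by
  simp only [integral_sub_pow_quarterCircle hσ, Finset.sum_range_succ, Finset.sum_range_zero,
    integral_sin_pow_zero_pi_div_two, integral_sin_pow_one_pi_div_two,
    integral_sin_pow_two_pi_div_two, integral_sin_pow_three_pi_div_two,
    integral_sin_pow_four_pi_div_two]
  norm_num [Nat.choose]
  field_simp
  ring

theorem pi_sq_lt_800_div_81 : π ^ 2 < 800 / 81 := by
  nlinarith [pi_lt_d4, pi_pos]

theorem quarterCircle_neg_free_kurtosis (σ : ℝ) (hσ : 0 < σ) :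
    (∫ x, (x - ∫ y, y ∂(quarterCircle σ)) ^ 4 ∂(quarterCircle σ)) <
      2 * (∫ x, (x - ∫ y, y ∂(quarterCircle σ)) ^ 2 ∂(quarterCircle σ)) ^ 2 := by
  rw [integral_id_quarterCircle hσ, integral_sub_mean_sq_quarterCircle hσ,
    integral_sub_mean_pow_four_quarterCircle hσ]
  have hgap : 2 * (σ ^ 2 - 64 * σ ^ 2 / (9 * π ^ 2)) ^ 2
      - (2 * σ ^ 4 - 128 * σ ^ 4 / (45 * π ^ 2) - 4096 * σ ^ 4 / (27 * π ^ 4))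
      = 1152 * σ ^ 4 / (45 * π ^ 4) * (800 / 81 - π ^ 2) := by
    field_simp
    ring
  have hpos : 0 < 1152 * σ ^ 4 / (45 * π ^ 4) * (800 / 81 - π ^ 2) :=
    mul_pos (by positivity) (sub_pos.mpr pi_sq_lt_800_div_81)
  linarith
end

section
/- Let μ be a probability measure on ℝ with μ((−∞, 0)) = 0 that satisfies either (i) μ({0}) > 0, or (ii) μ({0}) = 0 and ∫_(0,1] (1/x) dμ(x) = ∞. Then the Cauchy transform G_μ(x) = ∫ (x − t)⁻¹ dμ(t) tends to −∞ as x tends to 0 from the left, and consequently the reciprocal Cauchy transform F_μ(x) = (∫ (x − t)⁻¹ dμ(t))⁻¹ tends to 0 as x tends to 0 from the left. -/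
/-!
For `x < 0` and `μ` carried by `[0, ∞)`, `-G_μ(x) = ∫ (t - x)⁻¹ dμ(t)` increases as `x ↑ 0`, and by
monotone convergence its limit is `∫ t⁻¹ dμ(t)`, computed in `ℝ≥0∞` where `0⁻¹ = ∞`. This integral
is infinite in both cases: through the atom at `0` in case (i), and through the divergent integral
over `(0, 1]` in case (ii). Hence `G_μ → -∞` and `F_μ = G_μ⁻¹ → 0`.
-/

open MeasureTheory Filter Topology Set

lemma ENNReal.tendsto_toReal_atTop_of_tendsto_top {α : Type*} {l : Filter α} {f : α → ENNReal}
    (hf : Tendsto f l (𝓝 ⊤)) (hfin : ∀ᶠ a in l, f a ≠ ⊤) :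
    Tendsto (fun a => (f a).toReal) l atTop := by
  refine tendsto_atTop.2 fun M => ?_
  filter_upwards [ENNReal.tendsto_nhds_top_iff_nnreal.1 hf M.toNNReal, hfin] with a hMa hfa
  calc M ≤ M.toNNReal := M.le_coe_toNNReal
    _ ≤ (f a).toReal := by
      simpa using ENNReal.toReal_mono hfa hMa.le

lemma ae_nonneg_of_measure_Iio_eq_zero {μ : Measure ℝ} (h : μ (Iio 0) = 0) : ∀ᵐ t ∂μ, 0 ≤ t :=
  (measure_eq_zero_iff_ae_notMem.1 h).mono fun _ ht => not_lt.1 ht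

section InvSub

variable (μ : Measure ℝ)

/-- Unlike `ENNReal.ofReal (t - x)⁻¹`, the integrand `(ENNReal.ofReal (t - x))⁻¹` is `⊤` for
`t ≤ x` and hence monotone in `x` for every `t`, whatever the support of `μ`. -/
lemma monotone_lintegral_inv_ofReal_sub :
    Monotone fun x => ∫⁻ t, (ENNReal.ofReal (t - x))⁻¹ ∂μ :=
  fun _ _ hxy => lintegral_mono fun _ =>
    ENNReal.inv_le_inv.2 (ENNReal.ofReal_le_ofReal (by linarith))

lemma tendsto_lintegral_inv_ofReal_sub_nhdsLT (a : ℝ) :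
    Tendsto (fun x => ∫⁻ t, (ENNReal.ofReal (t - x))⁻¹ ∂μ) (𝓝[<] a)
      (𝓝 (∫⁻ t, (ENNReal.ofReal (t - a))⁻¹ ∂μ)) := by
  set L := fun x => ∫⁻ t, (ENNReal.ofReal (t - x))⁻¹ ∂μ
  set x : ℕ → ℝ := fun n => a - 1 / (n + 1)
  have hx : Tendsto x atTop (𝓝[<] a) := by
    refine tendsto_nhdsWithin_iff.2 ⟨?_, Eventually.of_forall fun n => ?_⟩
    · simpa [x] using (tendsto_const_nhds (x := a)).sub tendsto_one_div_add_atTop_nhds_zero_nat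
    · simp only [x, mem_Iio, sub_lt_self_iff]; positivity
  have hseq : Tendsto (L ∘ x) atTop (𝓝 (L a)) := by
    refine lintegral_tendsto_of_tendsto_of_monotone (fun n => by fun_prop)
      (Eventually.of_forall fun t m n hmn => ?_) (Eventually.of_forall fun t => ?_)
    · have : x m ≤ x n := sub_le_sub_left (Nat.one_div_le_one_div hmn) a
      exact ENNReal.inv_le_inv.2 (ENNReal.ofReal_le_ofReal (by linarith))
    · have hcont : Continuous fun y => (ENNReal.ofReal (t - y))⁻¹ :=
        (ENNReal.continuous_ofReal.comp (continuous_sub_left t)).inv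
      exact (hcont.tendsto a).comp (tendsto_nhds_of_tendsto_nhdsWithin hx)
  -- the left limit `sSup (L '' Iio a)` of the monotone `L` is identified along the sequence `x`
  have hsup := (monotone_lintegral_inv_ofReal_sub μ).tendsto_nhdsLT a
  rwa [tendsto_nhds_unique (hsup.comp hx) hseq] at hsup

end InvSub

lemma lintegral_inv_ofReal_eq_top_of_measure_zero_pos {μ : Measure ℝ} (h0 : 0 < μ {0}) :
    ∫⁻ t, (ENNReal.ofReal t)⁻¹ ∂μ = ⊤ :=
  top_unique <| calc
    ⊤ = ∫⁻ t in {0}, (ENNReal.ofReal t)⁻¹ ∂μ := by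
      simp [ENNReal.mul_top h0.ne']
    _ ≤ ∫⁻ t, (ENNReal.ofReal t)⁻¹ ∂μ := setLIntegral_le_lintegral _ _

lemma lintegral_inv_ofReal_eq_top_of_setLIntegral {μ : Measure ℝ} {s : Set ℝ}
    (hs : ∫⁻ t in s, ENNReal.ofReal (1 / t) ∂μ = ⊤) :
    ∫⁻ t, (ENNReal.ofReal t)⁻¹ ∂μ = ⊤ :=
  top_unique <| calc
    ⊤ = ∫⁻ t in s, ENNReal.ofReal (1 / t) ∂μ := hs.symm
    _ ≤ ∫⁻ t in s, (ENNReal.ofReal t)⁻¹ ∂μ :=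
      lintegral_mono fun t => by simpa only [one_div] using ENNReal.ofReal_inv_le
    _ ≤ ∫⁻ t, (ENNReal.ofReal t)⁻¹ ∂μ := setLIntegral_le_lintegral _ _

section NonnegSupport

variable {μ : Measure ℝ}

lemma integral_inv_sub_eq_toReal_lintegral (hμ : ∀ᵐ t ∂μ, 0 ≤ t) {x : ℝ} (hx : x < 0) :
    ∫ t, (t - x)⁻¹ ∂μ = (∫⁻ t, (ENNReal.ofReal (t - x))⁻¹ ∂μ).toReal := by
  rw [integral_eq_lintegral_of_nonneg_ae (hμ.mono fun t ht => inv_nonneg.2 (by linarith))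
    (by fun_prop)]
  exact congrArg _ <| lintegral_congr_ae <|
    hμ.mono fun t ht => ENNReal.ofReal_inv_of_pos (by linarith)

lemma lintegral_inv_ofReal_sub_ne_top [IsFiniteMeasure μ] (hμ : ∀ᵐ t ∂μ, 0 ≤ t) {x : ℝ}
    (hx : x < 0) :
    ∫⁻ t, (ENNReal.ofReal (t - x))⁻¹ ∂μ ≠ ⊤ := by
  refine ne_top_of_le_ne_top ?_ (lintegral_mono_ae (g := fun _ => (ENNReal.ofReal (-x))⁻¹) ?_)
  · simp [lintegral_const, ENNReal.mul_eq_top, hx]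
  · exact hμ.mono fun t ht => ENNReal.inv_le_inv.2 (ENNReal.ofReal_le_ofReal (by linarith))

lemma tendsto_integral_inv_sub_atTop [IsFiniteMeasure μ] (hμ : ∀ᵐ t ∂μ, 0 ≤ t)
    (htop : ∫⁻ t, (ENNReal.ofReal t)⁻¹ ∂μ = ⊤) :
    Tendsto (fun x => ∫ t, (t - x)⁻¹ ∂μ) (𝓝[<] 0) atTop := by
  have hL := tendsto_lintegral_inv_ofReal_sub_nhdsLT μ 0
  simp only [sub_zero, htop] at hL
  refine (ENNReal.tendsto_toReal_atTop_of_tendsto_top hL <| eventually_nhdsWithin_of_forall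
    fun x hx => lintegral_inv_ofReal_sub_ne_top hμ hx).congr' ?_
  filter_upwards [self_mem_nhdsWithin] with x hx
  exact (integral_inv_sub_eq_toReal_lintegral hμ hx).symm

end NonnegSupport

theorem cauchyTransform_tendsto_atBot (μ : Measure ℝ) [IsProbabilityMeasure μ]
    (h : μ (Set.Iio 0) = 0)
    (hcases : 0 < μ {0} ∨ (μ {0} = 0 ∧ (∫⁻ x in Set.Ioc 0 1, ENNReal.ofReal (1 / x) ∂μ) = ⊤)) :
    Tendsto (fun x : ℝ => ∫ t, (x - t)⁻¹ ∂μ) (nhdsWithin 0 (Set.Iio 0)) atBot ∧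
    Tendsto (fun x : ℝ => (∫ t, (x - t)⁻¹ ∂μ)⁻¹) (nhdsWithin 0 (Set.Iio 0)) (nhds 0) := by
  have hμ := ae_nonneg_of_measure_Iio_eq_zero h
  have htop : ∫⁻ t, (ENNReal.ofReal t)⁻¹ ∂μ = ⊤ := hcases.elim
    lintegral_inv_ofReal_eq_top_of_measure_zero_pos
    fun h' => lintegral_inv_ofReal_eq_top_of_setLIntegral h'.2
  have hG : (fun x : ℝ => ∫ t, (x - t)⁻¹ ∂μ) = fun x => -∫ t, (t - x)⁻¹ ∂μ := by
    funext x
    rw [← integral_neg]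
    simp only [← inv_neg, neg_sub]
  have hbot : Tendsto (fun x : ℝ => ∫ t, (x - t)⁻¹ ∂μ) (𝓝[<] 0) atBot :=
    hG ▸ tendsto_neg_atTop_atBot.comp (tendsto_integral_inv_sub_atTop hμ htop)
  exact ⟨hbot, tendsto_inv_atBot_zero.comp hbot⟩
end

section
/- Let μ be a probability measure on ℝ with μ((−∞, 0)) = 0 and μ({0}) < 1. Then the function ψ(s) = ∫_[0,∞) sx/(1 − sx) dμ(x) is strictly increasing on the negative half-line (−∞, 0); for every s < 0 one has ψ(s) ∈ (μ({0}) − 1, 0); ψ(s) tends to μ({0}) − 1 as s → −∞; and ψ(s) tends to 0 as s tends to 0 from the left. -/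
/-!
For `s ≤ 0 ≤ x` the kernel `s x / (1 - s x) = (1 - s x)⁻¹ - 1` lies in `(-1, 0]`, vanishes at
`x = 0` and is strictly increasing in `s` when `x > 0`. As `μ` is carried by `[0, ∞)` and gives
`(0, ∞)` positive mass, integrating these facts gives strict monotonicity and both bounds. The
limits follow by dominated convergence with the constant bound `1`: as `s → -∞` the kernel tends
to `𝟙_{0}(x) - 1`, whose integral is `μ {0} - 1`, and as `s → 0` it tends to `0`.
-/

open MeasureTheory Filter Set Topology

noncomputable def psiKernel (s x : ℝ) : ℝ := s * x / (1 - s * x)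

noncomputable def psiTransform (μ : Measure ℝ) (s : ℝ) : ℝ := ∫ x, psiKernel s x ∂μ

section Kernel

variable {s t x : ℝ}

lemma psiKernel_zero_left (x : ℝ) : psiKernel 0 x = 0 := by simp [psiKernel]

lemma psiKernel_zero_right (s : ℝ) : psiKernel s 0 = 0 := by simp [psiKernel]

lemma one_sub_mul_pos (hs : s ≤ 0) (hx : 0 ≤ x) : 0 < 1 - s * x :=
  sub_pos.2 ((mul_nonpos_of_nonpos_of_nonneg hs hx).trans_lt one_pos)

lemma psiKernel_eq_inv_sub_one (h : 1 - s * x ≠ 0) : psiKernel s x = (1 - s * x)⁻¹ - 1 := by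
  unfold psiKernel
  field_simp
  ring

lemma psiKernel_nonpos (hs : s ≤ 0) (hx : 0 ≤ x) : psiKernel s x ≤ 0 :=
  div_nonpos_of_nonpos_of_nonneg (mul_nonpos_of_nonpos_of_nonneg hs hx)
    (one_sub_mul_pos hs hx).le

lemma neg_one_lt_psiKernel (hs : s ≤ 0) (hx : 0 ≤ x) : -1 < psiKernel s x := by
  rw [psiKernel, lt_div_iff₀ (one_sub_mul_pos hs hx)]
  linarith

lemma norm_psiKernel_le_one (hs : s ≤ 0) (hx : 0 ≤ x) : ‖psiKernel s x‖ ≤ 1 := by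
  rw [Real.norm_eq_abs, abs_le]
  exact ⟨(neg_one_lt_psiKernel hs hx).le, (psiKernel_nonpos hs hx).trans zero_le_one⟩

lemma psiKernel_lt_psiKernel (hst : s < t) (ht : t ≤ 0) (hx : 0 < x) :
    psiKernel s x < psiKernel t x := by
  rw [psiKernel, psiKernel, div_lt_div_iff₀ (one_sub_mul_pos (hst.le.trans ht) hx.le)
    (one_sub_mul_pos ht hx.le)]
  nlinarith [mul_pos (sub_pos.2 hst) hx]

lemma tendsto_psiKernel_atBot (hx : 0 < x) :
    Tendsto (fun s => psiKernel s x) atBot (𝓝 (-1)) := by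
  have h_denom : Tendsto (fun s => 1 - s * x) atBot atTop :=
    tendsto_atTop_add_const_left _ 1
      (tendsto_neg_atBot_atTop.comp (tendsto_id.atBot_mul_const hx))
  have h_lim : Tendsto (fun s => (1 - s * x)⁻¹ - 1) atBot (𝓝 (0 - 1)) :=
    h_denom.inv_tendsto_atTop.sub_const 1
  rw [zero_sub] at h_lim
  refine h_lim.congr' ?_
  filter_upwards [eventually_le_atBot 0] with s hs
  exact (psiKernel_eq_inv_sub_one (one_sub_mul_pos hs hx.le).ne').symm

lemma tendsto_psiKernel_nhds_zero (x : ℝ) :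
    Tendsto (fun s => psiKernel s x) (𝓝 0) (𝓝 0) := by
  have h : ContinuousAt (fun s => psiKernel s x) 0 := by
    unfold psiKernel
    exact ContinuousAt.div (by fun_prop) (by fun_prop) (by simp)
  simpa [psiKernel_zero_left] using h.tendsto

end Kernel

section Transform

variable {μ : Measure ℝ}

lemma measurable_psiKernel (s : ℝ) : Measurable (psiKernel s) := by
  unfold psiKernel
  fun_prop

lemma integrable_psiKernel [IsFiniteMeasure μ] (hμ : ∀ᵐ x ∂μ, 0 ≤ x) {s : ℝ} (hs : s ≤ 0) :
    Integrable (psiKernel s) μ := by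
  refine Integrable.mono' (integrable_const 1) ?_ (hμ.mono fun x hx => norm_psiKernel_le_one hs hx)
  exact (measurable_psiKernel s).aestronglyMeasurable

lemma measure_Ioi_ne_zero_of_measure_Iio_eq_zero [IsProbabilityMeasure μ] {a : ℝ}
    (h : μ (Iio a) = 0) (ha : μ {a} < 1) : μ (Ioi a) ≠ 0 := fun h' => by
  have : μ {a}ᶜ = 0 := by rw [← Iio_union_Ioi]; exact measure_union_null h h'
  exact ha.ne ((prob_compl_eq_zero_iff (measurableSet_singleton a)).1 this)

lemma integral_lt_integral_of_lt_on_Ioi (hμ : ∀ᵐ x ∂μ, 0 ≤ x) (hpos : μ (Ioi 0) ≠ 0)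
    {f g : ℝ → ℝ} (hf : Integrable f μ) (hg : Integrable g μ) (h0 : f 0 ≤ g 0)
    (hlt : ∀ x, 0 < x → f x < g x) : ∫ x, f x ∂μ < ∫ x, g x ∂μ := by
  have hle : ∀ᵐ x ∂μ, 0 ≤ (g - f) x := hμ.mono fun x hx => by
    rcases hx.eq_or_lt with rfl | hx
    · exact sub_nonneg.2 h0
    · exact sub_nonneg.2 (hlt x hx).le
  have h_support : Ioi 0 ⊆ Function.support (g - f) := fun x hx =>
    sub_ne_zero.2 (hlt x hx).ne'
  rw [← sub_pos, ← integral_sub hg hf]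
  exact (integral_pos_iff_support_of_nonneg_ae hle (hg.sub hf)).2
    (pos_iff_ne_zero.2 (mt (measure_mono_null h_support) hpos))

lemma psiTransform_zero (μ : Measure ℝ) : psiTransform μ 0 = 0 := by
  simp [psiTransform, psiKernel_zero_left]

lemma strictMonoOn_psiTransform [IsFiniteMeasure μ] (hμ : ∀ᵐ x ∂μ, 0 ≤ x)
    (hpos : μ (Ioi 0) ≠ 0) : StrictMonoOn (psiTransform μ) (Iic 0) := fun s hs t ht hst =>
  integral_lt_integral_of_lt_on_Ioi hμ hpos (integrable_psiKernel hμ hs)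
    (integrable_psiKernel hμ ht) (by simp [psiKernel_zero_right])
    fun _ hx => psiKernel_lt_psiKernel hst ht hx

lemma integral_indicator_zero_sub_one [IsProbabilityMeasure μ] :
    ∫ x, ({0} : Set ℝ).indicator 1 x - 1 ∂μ = μ.real {0} - 1 := by
  rw [integral_sub ((integrable_const 1).indicator (measurableSet_singleton 0))
    (integrable_const 1), integral_indicator_one (measurableSet_singleton 0)]
  simp

lemma measureReal_singleton_zero_sub_one_lt_psiTransform [IsProbabilityMeasure μ]
    (hμ : ∀ᵐ x ∂μ, 0 ≤ x) (hpos : μ (Ioi 0) ≠ 0) {s : ℝ} (hs : s ≤ 0) : μ.real {0} - 1 < psiTransform μ s := by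
  rw [← integral_indicator_zero_sub_one]
  refine integral_lt_integral_of_lt_on_Ioi hμ hpos
    (((integrable_const 1).indicator (measurableSet_singleton 0)).sub (integrable_const 1))
    (integrable_psiKernel hμ hs) (by simp [psiKernel_zero_right]) fun x hx => ?_
  simpa [hx.ne'] using neg_one_lt_psiKernel hs hx.le

lemma tendsto_psiTransform [IsFiniteMeasure μ] (hμ : ∀ᵐ x ∂μ, 0 ≤ x) {l : Filter ℝ}
    [l.IsCountablyGenerated] (hl : ∀ᶠ s in l, s ≤ 0) {g : ℝ → ℝ}
    (hg : ∀ᵐ x ∂μ, Tendsto (fun s => psiKernel s x) l (𝓝 (g x))) :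
    Tendsto (psiTransform μ) l (𝓝 (∫ x, g x ∂μ)) := by
  refine tendsto_integral_filter_of_dominated_convergence (fun _ => 1)
    (hl.mono fun s hs => (integrable_psiKernel hμ hs).aestronglyMeasurable) ?_
    (integrable_const 1) hg
  filter_upwards [hl] with s hs
  exact hμ.mono fun x hx => norm_psiKernel_le_one hs hx

lemma tendsto_psiTransform_atBot [IsProbabilityMeasure μ] (hμ : ∀ᵐ x ∂μ, 0 ≤ x) :
    Tendsto (psiTransform μ) atBot (𝓝 (μ.real {0} - 1)) := by
  rw [← integral_indicator_zero_sub_one]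
  refine tendsto_psiTransform hμ (eventually_le_atBot 0) (hμ.mono fun x hx => ?_)
  rcases hx.eq_or_lt with rfl | hx
  · simp [psiKernel_zero_right]
  · simpa [hx.ne'] using tendsto_psiKernel_atBot hx

lemma tendsto_psiTransform_nhdsLT_zero [IsFiniteMeasure μ] (hμ : ∀ᵐ x ∂μ, 0 ≤ x) :
    Tendsto (psiTransform μ) (𝓝[<] 0) (𝓝 0) := by
  simpa using tendsto_psiTransform (l := 𝓝[<] 0) hμ
    (eventually_mem_nhdsWithin.mono fun _ hs => le_of_lt hs)
    (ae_of_all μ fun x => (tendsto_psiKernel_nhds_zero x).mono_left nhdsWithin_le_nhds)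

end Transform

theorem psi_transform_properties (μ : Measure ℝ) [IsProbabilityMeasure μ]
    (h : μ (Set.Iio 0) = 0) (h0 : μ {0} < 1) :
    StrictMonoOn (fun s : ℝ => ∫ x, s * x / (1 - s * x) ∂μ) (Set.Iio 0) ∧
    (∀ s < (0 : ℝ), (∫ x, s * x / (1 - s * x) ∂μ) ∈ Set.Ioo ((μ {0}).toReal - 1) 0) ∧
    Tendsto (fun s : ℝ => ∫ x, s * x / (1 - s * x) ∂μ) atBot (nhds ((μ {0}).toReal - 1)) ∧
    Tendsto (fun s : ℝ => ∫ x, s * x / (1 - s * x) ∂μ) (nhdsWithin 0 (Set.Iio 0)) (nhds 0) := by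
  have hμ : ∀ᵐ x ∂μ, 0 ≤ x := (measure_eq_zero_iff_ae_notMem.1 h).mono fun _ hx => not_lt.1 hx
  have hpos := measure_Ioi_ne_zero_of_measure_Iio_eq_zero h h0
  have hmono := strictMonoOn_psiTransform hμ hpos
  refine ⟨hmono.mono Iio_subset_Iic_self, fun s hs => ⟨?_, ?_⟩,
    tendsto_psiTransform_atBot hμ, tendsto_psiTransform_nhdsLT_zero hμ⟩
  · exact measureReal_singleton_zero_sub_one_lt_psiTransform hμ hpos hs.le
  · exact (hmono hs.le self_mem_Iic hs).trans_eq (psiTransform_zero μ)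
end

section
/- Boolean convolution preserves positive support: let μ and ν be probability measures on ℝ with μ((−∞, 0)) = 0 and ν((−∞, 0)) = 0, and let ρ be a probability measure on ℝ such that for all z ∈ ℂ with Im z > 0, F_ρ(z) = F_μ(z) + F_ν(z) − z, where F_λ(z) = ( ∫ (z − t)⁻¹ dλ(t) )⁻¹ denotes the reciprocal Cauchy transform. Then ρ((−∞, 0)) = 0. -/
/-!
For a probability measure `λ` on `[0, ∞)` and `z = x + iy` with `x < 0 < y`, write
`I_λ(z) = ∫ |z - t|⁻² dλ(t)`, so that `Im G_λ(z) = -y I_λ(z)`. Since `Re G_λ(z) ≤ x I_λ(z) < 0`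
and `|G_λ(z)|² ≤ I_λ(z)` (Jensen), one gets `Re F_λ(z) ≤ x` and `x² Im F_λ(z) ≤ y / I_λ(z)`.
The boolean relation transfers the first bound to `ρ`, so `|F_ρ(z)| ≥ |x|`, and then
`Im F_ρ = y I_ρ |F_ρ|²` together with the second bound for `μ` and `ν` keeps `I_ρ(x + iy)` bounded
as `y → 0`. As `ρ([x - y, x + y]) ≤ 2 y² I_ρ(x + iy)`, the distribution function of `ρ` has
derivative zero at every `x < 0`, hence is constant there, and `ρ` puts no mass on `(-∞, 0)`.
-/
open MeasureTheory Complex Set Filter Topology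

section LocalMass

variable {ρ : Measure ℝ} [IsFiniteMeasure ρ]

lemma abs_measureReal_Iic_sub_le (x y : ℝ) :
    |ρ.real (Iic y) - ρ.real (Iic x)| ≤ ρ.real (Icc (x - |y - x|) (x + |y - x|)) := by
  rcases le_total x y with hxy | hyx
  · rw [← measureReal_sdiff (Iic_subset_Iic.2 hxy) measurableSet_Iic, Iic_sdiff_Iic,
      abs_of_nonneg measureReal_nonneg, abs_of_nonneg (sub_nonneg.2 hxy)]
    exact measureReal_mono (Ioc_subset_Icc_self.trans (Icc_subset_Icc (by linarith) (by linarith)))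
  · rw [abs_sub_comm, ← measureReal_sdiff (Iic_subset_Iic.2 hyx) measurableSet_Iic, Iic_sdiff_Iic,
      abs_of_nonneg measureReal_nonneg, abs_of_nonpos (sub_nonpos.2 hyx)]
    exact measureReal_mono (Ioc_subset_Icc_self.trans (Icc_subset_Icc (by linarith) (by linarith)))

lemma hasDerivAt_measureReal_Iic_of_measureReal_Icc_le_sq {x K : ℝ}
    (h : ∀ᶠ ε in 𝓝[>] 0, ρ.real (Icc (x - ε) (x + ε)) ≤ K * ε ^ 2) :
    HasDerivAt (fun y => ρ.real (Iic y)) 0 x := by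
  obtain ⟨δ, hδ, hsmall⟩ := (nhdsGT_basis (0 : ℝ)).eventually_iff.1 h
  have hbound : ∀ᶠ y in 𝓝 x, ‖ρ.real (Iic y) - ρ.real (Iic x)‖ ≤ K * ‖‖y - x‖ ^ 2‖ := by
    filter_upwards [Metric.ball_mem_nhds x hδ] with y hy
    rcases eq_or_ne y x with rfl | hne
    · simp
    · rw [norm_pow, norm_norm, Real.norm_eq_abs, Real.norm_eq_abs]
      exact (abs_measureReal_Iic_sub_le x y).trans
        (hsmall ⟨abs_pos.2 (sub_ne_zero.2 hne), hy⟩)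
  simpa using ((Asymptotics.IsBigO.of_bound K hbound).hasFDerivAt one_lt_two).hasDerivAt.add_const
    (ρ.real (Iic x))

lemma measure_Iio_eq_zero_of_measureReal_Icc_le_sq {c : ℝ}
    (h : ∀ x < c, ∃ K, ∀ᶠ ε in 𝓝[>] 0, ρ.real (Icc (x - ε) (x + ε)) ≤ K * ε ^ 2) :
    ρ (Iio c) = 0 := by
  have hderiv : ∀ x ∈ Iio c, HasDerivAt (fun y => ρ.real (Iic y)) 0 x := fun x hx =>
    hasDerivAt_measureReal_Iic_of_measureReal_Icc_le_sq (h x hx).choose_spec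
  have hIoc : ∀ x y, y < c → ρ (Ioc x y) = 0 := by
    intro x y hy
    rcases le_or_gt x y with hxy | hyx
    · have hconst := isOpen_Iio.is_const_of_deriv_eq_zero isPreconnected_Iio
        (fun x hx => (hderiv x hx).differentiableAt.differentiableWithinAt)
        (fun x hx => (hderiv x hx).deriv) (hxy.trans_lt hy) hy
      rw [← measureReal_eq_zero_iff, ← Iic_sdiff_Iic,
        measureReal_sdiff (Iic_subset_Iic.2 hxy) measurableSet_Iic, hconst, sub_self]
    · rw [Ioc_eq_empty_of_le hyx.le, measure_empty]
  have hcover : Iio c ⊆ ⋃ (m : ℕ) (n : ℕ), Ioc (-(m : ℝ)) (c - 1 / (n + 1)) := by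
    intro x hx
    obtain ⟨m, hm⟩ := exists_nat_gt (-x)
    obtain ⟨n, hn⟩ := exists_nat_one_div_lt (sub_pos.2 (mem_Iio.1 hx))
    exact mem_iUnion₂.2 ⟨m, n, by linarith, by linarith⟩
  exact measure_mono_null hcover <| measure_iUnion_null fun m => measure_iUnion_null fun n =>
    hIoc _ _ (sub_lt_self c (by positivity))

end LocalMass

noncomputable def cauchyTransform (μ : Measure ℝ) (z : ℂ) : ℂ := ∫ t : ℝ, (z - t)⁻¹ ∂μ

lemma normSq_sub_ofReal (z : ℂ) (t : ℝ) : normSq (z - t) = (z.re - t) ^ 2 + z.im ^ 2 := by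
  simp [normSq_apply, sq]

lemma sq_im_le_normSq_sub_ofReal (z : ℂ) (t : ℝ) : z.im ^ 2 ≤ normSq (z - t) := by
  rw [normSq_sub_ofReal]
  exact le_add_of_nonneg_left (sq_nonneg _)

section CauchyTransform

variable {μ : Measure ℝ} {z : ℂ}

lemma normSq_sub_ofReal_pos (hz : z.im ≠ 0) (t : ℝ) : 0 < normSq (z - t) :=
  (sq_pos_of_ne_zero hz).trans_le (sq_im_le_normSq_sub_ofReal z t)

lemma integrable_inv_normSq_sub_ofReal [IsFiniteMeasure μ] (hz : z.im ≠ 0) :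
    Integrable (fun t : ℝ => (normSq (z - t))⁻¹) μ := by
  refine .of_bound (by fun_prop) (z.im ^ 2)⁻¹ (.of_forall fun t => ?_)
  rw [Real.norm_of_nonneg (inv_nonneg.2 (normSq_nonneg _))]
  exact inv_anti₀ (by positivity) (sq_im_le_normSq_sub_ofReal z t)

lemma integrable_inv_sub_ofReal [IsFiniteMeasure μ] (hz : z.im ≠ 0) :
    Integrable (fun t : ℝ => (z - t)⁻¹) μ := by
  refine .of_bound ((continuous_const.sub continuous_ofReal).inv₀ fun t => ?_).aestronglyMeasurable
    |z.im|⁻¹ (.of_forall fun t => ?_)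
  · exact normSq_pos.1 (normSq_sub_ofReal_pos hz t)
  · rw [norm_inv]
    exact inv_anti₀ (abs_pos.2 hz) (by simpa using abs_im_le_norm (z - t))

lemma im_cauchyTransform [IsFiniteMeasure μ] (hz : z.im ≠ 0) :
    (cauchyTransform μ z).im = -z.im * ∫ t, (normSq (z - t))⁻¹ ∂μ := by
  rw [cauchyTransform, ← integral_const_mul, ← RCLike.im_to_complex,
    ← integral_im (integrable_inv_sub_ofReal hz)]
  congr 1 with t
  simp [div_eq_mul_inv]

lemma re_cauchyTransform_le [IsFiniteMeasure μ] (hμ : μ (Iio 0) = 0) (hz : z.im ≠ 0) :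
    (cauchyTransform μ z).re ≤ z.re * ∫ t, (normSq (z - t))⁻¹ ∂μ := by
  rw [cauchyTransform, ← integral_const_mul, ← RCLike.re_to_complex,
    ← integral_re (integrable_inv_sub_ofReal hz)]
  refine integral_mono_ae (integrable_inv_sub_ofReal hz).re
    ((integrable_inv_normSq_sub_ofReal hz).const_mul _) ?_
  filter_upwards [measure_eq_zero_iff_ae_notMem.1 hμ] with t ht
  have ht : 0 ≤ t := not_lt.1 ht
  simp only [RCLike.re_to_complex, inv_re, sub_re, ofReal_re, div_eq_mul_inv]
  exact mul_le_mul_of_nonneg_right (by linarith) (inv_nonneg.2 (normSq_nonneg _))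

lemma normSq_cauchyTransform_le [IsProbabilityMeasure μ] (hz : z.im ≠ 0) :
    normSq (cauchyTransform μ z) ≤ ∫ t, (normSq (z - t))⁻¹ ∂μ := by
  have hjensen := ((convexOn_norm convex_univ).pow (fun _ _ => norm_nonneg _) 2).map_integral_le
    (continuous_norm.pow 2).continuousOn isClosed_univ (.of_forall fun _ => mem_univ _)
    (integrable_inv_sub_ofReal (μ := μ) hz) ?_
  · simpa [cauchyTransform, ← normSq_eq_norm_sq] using hjensen
  · simpa [Function.comp_def, ← normSq_eq_norm_sq] using integrable_inv_normSq_sub_ofReal hz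

lemma integral_inv_normSq_sub_ofReal_pos [IsFiniteMeasure μ] [NeZero μ] (hz : z.im ≠ 0) :
    0 < ∫ t, (normSq (z - t))⁻¹ ∂μ := by
  have hpos (t : ℝ) : 0 < (normSq (z - t))⁻¹ := inv_pos.2 (normSq_sub_ofReal_pos hz t)
  rw [integral_pos_iff_support_of_nonneg (fun t => (hpos t).le)
    (integrable_inv_normSq_sub_ofReal hz), Function.support_eq_univ fun t => (hpos t).ne']
  exact Measure.measure_univ_pos.2 (NeZero.ne μ)

lemma im_inv_cauchyTransform [IsFiniteMeasure μ] (hz : z.im ≠ 0) :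
    (cauchyTransform μ z)⁻¹.im =
      z.im * (∫ t, (normSq (z - t))⁻¹ ∂μ) * normSq (cauchyTransform μ z)⁻¹ := by
  rw [inv_im, im_cauchyTransform hz, map_inv₀]
  ring

lemma re_inv_cauchyTransform_le [IsProbabilityMeasure μ] (hμ : μ (Iio 0) = 0) (hre : z.re < 0)
    (hz : z.im ≠ 0) : (cauchyTransform μ z)⁻¹.re ≤ z.re := by
  set G := cauchyTransform μ z
  have hGre : G.re ≤ z.re * ∫ t, (normSq (z - t))⁻¹ ∂μ := re_cauchyTransform_le hμ hz
  have hGre_neg : G.re < 0 :=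
    hGre.trans_lt (mul_neg_of_neg_of_pos hre (integral_inv_normSq_sub_ofReal_pos hz))
  have hG : 0 < normSq G := normSq_pos.2 fun h => by simp [h] at hGre_neg
  rw [inv_re, div_le_iff₀ hG]
  exact hGre.trans (mul_le_mul_of_nonpos_left (normSq_cauchyTransform_le hz) hre.le)

lemma sq_re_mul_im_inv_cauchyTransform_le [IsFiniteMeasure μ] [NeZero μ] (hμ : μ (Iio 0) = 0)
    (hre : z.re < 0) (hz : 0 < z.im) :
    z.re ^ 2 * (cauchyTransform μ z)⁻¹.im ≤ z.im * (∫ t, (normSq (z - t))⁻¹ ∂μ)⁻¹ := by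
  set G := cauchyTransform μ z
  set I := ∫ t, (normSq (z - t))⁻¹ ∂μ
  have hI : 0 < I := integral_inv_normSq_sub_ofReal_pos hz.ne'
  have hGre : G.re ≤ z.re * I := re_cauchyTransform_le hμ hz.ne'
  have hxI : z.re * I < 0 := mul_neg_of_neg_of_pos hre hI
  have hG : (z.re * I) ^ 2 ≤ normSq G := by nlinarith [re_sq_le_normSq G]
  have hxI_sq : 0 < (z.re * I) ^ 2 := sq_pos_of_ne_zero hxI.ne
  have hx : z.re ≠ 0 := hre.ne
  rw [im_inv_cauchyTransform hz.ne', map_inv₀]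
  calc z.re ^ 2 * (z.im * I * (normSq G)⁻¹)
      ≤ z.re ^ 2 * (z.im * I * ((z.re * I) ^ 2)⁻¹) := by gcongr
    _ = z.im * I⁻¹ := by field_simp

lemma integral_inv_normSq_sub_ofReal_le [IsFiniteMeasure μ] {w : ℂ} (hre : z.re = w.re)
    (hz : 0 < z.im) (hzw : z.im ≤ w.im) :
    ∫ t, (normSq (w - t))⁻¹ ∂μ ≤ ∫ t, (normSq (z - t))⁻¹ ∂μ := by
  refine integral_mono (integrable_inv_normSq_sub_ofReal (hz.trans_le hzw).ne')
    (integrable_inv_normSq_sub_ofReal hz.ne') fun t => ?_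
  refine inv_anti₀ (normSq_sub_ofReal_pos hz.ne' t) ?_
  rw [normSq_sub_ofReal, normSq_sub_ofReal, hre]
  gcongr

lemma measureReal_Icc_le_mul_integral_inv_normSq [IsFiniteMeasure μ] (hz : 0 < z.im) :
    μ.real (Icc (z.re - z.im) (z.re + z.im)) ≤ 2 * z.im ^ 2 * ∫ t, (normSq (z - t))⁻¹ ∂μ := by
  have hint := integrable_inv_normSq_sub_ofReal (μ := μ) hz.ne'
  have hset : (2 * z.im ^ 2)⁻¹ * μ.real (Icc (z.re - z.im) (z.re + z.im)) ≤
      ∫ t in Icc (z.re - z.im) (z.re + z.im), (normSq (z - t))⁻¹ ∂μ := by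
    refine setIntegral_ge_of_const_le_real measurableSet_Icc (measure_ne_top μ _)
      (fun t ht => inv_anti₀ (normSq_sub_ofReal_pos hz.ne' t) ?_) hint.integrableOn
    rw [normSq_sub_ofReal]
    nlinarith [ht.1, ht.2]
  rw [inv_mul_le_iff₀ (by positivity)] at hset
  exact hset.trans (mul_le_mul_of_nonneg_left (setIntegral_le_integral hint
    (.of_forall fun t => inv_nonneg.2 (normSq_nonneg _))) (by positivity))

end CauchyTransform

lemma measureReal_Icc_le_of_booleanConvolution {μ ν ρ : Measure ℝ} [IsProbabilityMeasure μ]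
    [IsProbabilityMeasure ν] [IsFiniteMeasure ρ] (hμ : μ (Iio 0) = 0) (hν : ν (Iio 0) = 0)
    {z : ℂ} (hre : z.re < 0) (hz : 0 < z.im)
    (h : (cauchyTransform ρ z)⁻¹ = (cauchyTransform μ z)⁻¹ + (cauchyTransform ν z)⁻¹ - z) :
    ρ.real (Icc (z.re - z.im) (z.re + z.im)) ≤
      2 * ((∫ t, (normSq (z - t))⁻¹ ∂μ)⁻¹ + (∫ t, (normSq (z - t))⁻¹ ∂ν)⁻¹) / z.re ^ 4 *
        z.im ^ 2 := by
  set F := (cauchyTransform ρ z)⁻¹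
  set I := ∫ t, (normSq (z - t))⁻¹ ∂ρ
  have hFre : F.re ≤ z.re := by
    have := congrArg re h
    simp only [sub_re, add_re] at this
    linarith [re_inv_cauchyTransform_le hμ hre hz.ne', re_inv_cauchyTransform_le hν hre hz.ne']
  have hFim : z.re ^ 2 * F.im ≤ z.im * ((∫ t, (normSq (z - t))⁻¹ ∂μ)⁻¹ +
      (∫ t, (normSq (z - t))⁻¹ ∂ν)⁻¹) := by
    have := congrArg im h
    simp only [sub_im, add_im] at this
    nlinarith [sq_re_mul_im_inv_cauchyTransform_le hμ hre hz,
      sq_re_mul_im_inv_cauchyTransform_le hν hre hz]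
  have hF : z.re ^ 2 ≤ normSq F := by nlinarith [re_sq_le_normSq F]
  have hI : 0 ≤ I := integral_nonneg fun t => inv_nonneg.2 (normSq_nonneg _)
  have hIbound : z.im * (z.re ^ 4 * I) ≤ z.im * ((∫ t, (normSq (z - t))⁻¹ ∂μ)⁻¹ +
      (∫ t, (normSq (z - t))⁻¹ ∂ν)⁻¹) := by
    refine le_trans ?_ hFim
    have hyI : 0 ≤ z.im * I := mul_nonneg hz.le hI
    rw [im_inv_cauchyTransform hz.ne']
    calc z.im * (z.re ^ 4 * I) = z.re ^ 2 * (z.im * I * z.re ^ 2) := by ring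
      _ ≤ z.re ^ 2 * (z.im * I * normSq F) := by gcongr
  have hx : z.re ≠ 0 := hre.ne
  calc ρ.real (Icc (z.re - z.im) (z.re + z.im)) ≤ 2 * z.im ^ 2 * I :=
        measureReal_Icc_le_mul_integral_inv_normSq hz
    _ = 2 * (z.re ^ 4 * I) / z.re ^ 4 * z.im ^ 2 := by field_simp
    _ ≤ _ := by gcongr; exact le_of_mul_le_mul_left hIbound hz

theorem boolean_convolution_preserves_positivity (μ ν ρ : Measure ℝ)
    [IsProbabilityMeasure μ] [IsProbabilityMeasure ν] [IsProbabilityMeasure ρ]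
    (hμ : μ (Set.Iio 0) = 0) (hν : ν (Set.Iio 0) = 0)
    (h : ∀ z : ℂ, 0 < z.im →
      (∫ t, (z - (t : ℂ))⁻¹ ∂ρ)⁻¹ =
        (∫ t, (z - (t : ℂ))⁻¹ ∂μ)⁻¹ + (∫ t, (z - (t : ℂ))⁻¹ ∂ν)⁻¹ - z) :
    ρ (Set.Iio 0) = 0 := by
  refine measure_Iio_eq_zero_of_measureReal_Icc_le_sq fun x hx => ?_
  set w : ℂ := ⟨x, 1⟩
  refine ⟨2 * ((∫ t, (normSq (w - t))⁻¹ ∂μ)⁻¹ + (∫ t, (normSq (w - t))⁻¹ ∂ν)⁻¹) / x ^ 4, ?_⟩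
  filter_upwards [Ioc_mem_nhdsGT one_pos] with y ⟨hy, hy1⟩
  set z : ℂ := ⟨x, y⟩
  have hle (m : Measure ℝ) [IsProbabilityMeasure m] :
      (∫ t, (normSq (z - t))⁻¹ ∂m)⁻¹ ≤ (∫ t, (normSq (w - t))⁻¹ ∂m)⁻¹ :=
    inv_anti₀ (integral_inv_normSq_sub_ofReal_pos one_ne_zero)
      (integral_inv_normSq_sub_ofReal_le rfl hy hy1)
  calc ρ.real (Icc (x - y) (x + y))
      ≤ 2 * ((∫ t, (normSq (z - t))⁻¹ ∂μ)⁻¹ + (∫ t, (normSq (z - t))⁻¹ ∂ν)⁻¹) / x ^ 4 * y ^ 2 :=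
        measureReal_Icc_le_of_booleanConvolution hμ hν hx hy (h z hy)
    _ ≤ _ := by gcongr 2 * (?_ + ?_) / _ * _ <;> exact hle _
end
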